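/- Assume (A1), (A2) and (A3) and fix i ∈ {1,2} and s > 0. Then there exist positive numbers c₅(s) and c₆(s), independent of the choice of antichain, such that for every finite maximal antichain Γ_i in H_i* (or, for i = 1, in H₁*(j) for some j ∈ Ψ; for i = 2, in H₂*(j⁺) for some j ∈ Ψ), writing l(Γ_i) = min_{σ∈Γ_i}|σ| and L(Γ_i) = max_{σ∈Γ_i}|σ|: if s ≤ s_{i,r} then c₅(s)·ρ_i(s)^{l(Γ_i)} ≤ Σ_{σ∈Γ_i}(p_σ s_σ^r)^{s/(s+r)} ≤ c₆(s)·ρ_i(s)^{L(Γ_i)}, and if s > s_{i,r} then c₅(s)·ρ_i(s)^{L(Γ_i)} ≤ Σ_{σ∈Γ_i}(p_σ s_σ^r)^{s/(s+r)} ≤ c₆(s)·ρ_i(s)^{l(Γ_i)}. -/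

import Mathlib

open scoped Classical ENNReal
open Filter MeasureTheory

noncomputable section

namespace MTM

/-- the edge relation of the directed graph `𝒢`: `(i,j) ∈ G₂ ↔ p i j > 0`. -/
def edge (p : ℕ → ℕ → ℝ) (i j : ℕ) : Prop := 0 < p i j

/-- product of transition weights along a word. -/
def pword (p : ℕ → ℕ → ℝ) : List ℕ → ℝ
  | [] => 1
  | [_] => 1
  | a :: b :: t => p a b * pword p (b :: t)

/-- product of contraction ratios along a word. -/
def sword (sr : ℕ → ℕ → ℝ) : List ℕ → ℝ
  | [] => 1
  | [_] => 1
  | a :: b :: t => sr a b * sword sr (b :: t)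

/-- `𝒯(σ)`: all lifts of a word, each letter `i` may be replaced by `i + N`. -/
def lifts (N : ℕ) : List ℕ → Finset (List ℕ)
  | [] => {[]}
  | i :: t => (lifts N t).biUnion fun l => {i :: l, (i + N) :: l}

/-- `Γ(σ) = G_n ∩ 𝒯(σ)`. -/
def Gam (p : ℕ → ℕ → ℝ) (N : ℕ) (σ : List ℕ) : Finset (List ℕ) :=
  (lifts N σ).filter fun τ => τ.Chain' (edge p)

/-- words over the alphabet `Ψ = {1,…,N}`. -/
def isPsiWord (N : ℕ) (σ : List ℕ) : Prop :=
  σ ≠ [] ∧ ∀ x ∈ σ, x ∈ Finset.Icc 1 N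

/-- `σ ∈ 𝒮_*`: a `Ψ`-word having at least one admissible lift. -/
def isSword (p : ℕ → ℕ → ℝ) (N : ℕ) (σ : List ℕ) : Prop :=
  isPsiWord N σ ∧ (Gam p N σ).Nonempty

/-- `σ ∈ G_*`: admissible words over `Ω = {1,…,2N}`. -/
def isGword (p : ℕ → ℕ → ℝ) (N : ℕ) (σ : List ℕ) : Prop :=
  σ ≠ [] ∧ (∀ x ∈ σ, x ∈ Finset.Icc 1 (2 * N)) ∧ σ.Chain' (edge p)

/-- `σ ∈ H₁^*`: admissible words with all letters in `Ψ`. -/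
def isH1word (p : ℕ → ℕ → ℝ) (N : ℕ) (σ : List ℕ) : Prop :=
  σ ≠ [] ∧ (∀ x ∈ σ, x ∈ Finset.Icc 1 N) ∧ σ.Chain' (edge p)

/-- `σ ∈ H₂^*`: admissible words with all letters in `Υ = {N+1,…,2N}`. -/
def isH2word (p : ℕ → ℕ → ℝ) (N : ℕ) (σ : List ℕ) : Prop :=
  σ ≠ [] ∧ (∀ x ∈ σ, x ∈ Finset.Icc (N + 1) (2 * N)) ∧ σ.Chain' (edge p)

/-- `μ(J_σ) = Σ_{σ̃ ∈ Γ(σ)} χ_{σ̃₁} p_{σ̃}`. -/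
def muJ (p : ℕ → ℕ → ℝ) (χ : ℕ → ℝ) (N : ℕ) (σ : List ℕ) : ℝ :=
  ∑ τ ∈ Gam p N σ, χ (τ.headD 0) * pword p τ

/-- `ℰ_r(σ) = μ(J_σ) s_σ^r`, with `ℰ_r(θ) = 1` for the empty word. -/
def Er (p : ℕ → ℕ → ℝ) (χ : ℕ → ℝ) (sr : ℕ → ℕ → ℝ) (N : ℕ) (r : ℝ) (σ : List ℕ) : ℝ :=
  if σ = [] then 1 else muJ p χ N σ * sword sr σ ^ r

/-- `I_{1,σ}` resp. `I_{2,σ}`: the part of `μ(J_σ)` coming from lifts ending with `i`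
(resp. with `i⁺`, when applied with `i + N`). -/
def Ipart (p : ℕ → ℕ → ℝ) (χ : ℕ → ℝ) (N : ℕ) (i : ℕ) (σ : List ℕ) : ℝ :=
  ∑ τ ∈ (Gam p N σ).filter (fun τ => τ.getLastD 0 = i), χ (τ.headD 0) * pword p τ

/-- all words of a given length over a finite alphabet. -/
def wordsOfLen (S : Finset ℕ) : ℕ → Finset (List ℕ)
  | 0 => {[]}
  | n + 1 => (wordsOfLen S n).biUnion fun l => S.image fun a => a :: l

/-- `𝒮_n` as a finite set of words. -/
def Sn (p : ℕ → ℕ → ℝ) (N n : ℕ) : Finset (List ℕ) :=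
  (wordsOfLen (Finset.Icc 1 N) n).filter (isSword p N)

/-- irreducibility of the sub-matrix of `p` indexed by `S`: the corresponding directed
graph is strongly connected. -/
def irreducibleOn (p : ℕ → ℕ → ℝ) (S : Finset ℕ) : Prop :=
  ∀ i ∈ S, ∀ j ∈ S, ∃ c : List ℕ, (∀ x ∈ c, x ∈ S) ∧ List.Chain (edge p) i (c ++ [j])

/-- Assumption (A1): `P₁, P₂` irreducible and `P₄ = 0`. -/
def A1 (p : ℕ → ℕ → ℝ) (N : ℕ) : Prop :=
  irreducibleOn p (Finset.Icc 1 N) ∧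
    irreducibleOn (fun a b => p (a + N) (b + N)) (Finset.Icc 1 N) ∧
    ∀ i ∈ Finset.Icc 1 N, ∀ j ∈ Finset.Icc 1 N, p (i + N) j = 0

/-- Assumption (A2). -/
def A2 (p : ℕ → ℕ → ℝ) (N : ℕ) : Prop :=
  ∀ i ∈ Finset.Icc 1 N,
    2 ≤ ((Finset.Icc 1 N).filter fun j => 0 < p i j).card ∧
      2 ≤ ((Finset.Icc 1 N).filter fun j => 0 < p (i + N) (j + N)).card

/-- Assumption (A3): `ℳ_{i,j} = ∅` or `ℳ_{i,j} = {(i,j),(i,j⁺),(i⁺,j⁺)}`. -/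
def A3 (p : ℕ → ℕ → ℝ) (N : ℕ) : Prop :=
  ∀ i ∈ Finset.Icc 1 N, ∀ j ∈ Finset.Icc 1 N,
    (p i j = 0 ∧ p i (j + N) = 0 ∧ p (i + N) j = 0 ∧ p (i + N) (j + N) = 0) ∨
      (0 < p i j ∧ 0 < p i (j + N) ∧ p (i + N) j = 0 ∧ 0 < p (i + N) (j + N))

/-- Assumption (A4): `ℳ_{i,j} = ∅` or `ℳ_{i,j} = 𝒩_{i,j}`. -/
def A4 (p : ℕ → ℕ → ℝ) (N : ℕ) : Prop :=
  ∀ i ∈ Finset.Icc 1 N, ∀ j ∈ Finset.Icc 1 N,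
    (p i j = 0 ∧ p i (j + N) = 0 ∧ p (i + N) j = 0 ∧ p (i + N) (j + N) = 0) ∨
      (0 < p i j ∧ 0 < p i (j + N) ∧ 0 < p (i + N) j ∧ 0 < p (i + N) (j + N))

/-- Assumption (A5): `P₁` is irreducible. -/
def A5 (p : ℕ → ℕ → ℝ) (N : ℕ) : Prop := irreducibleOn p (Finset.Icc 1 N)

/-- `T_σ = T_{σ₁σ₂} ∘ ⋯ ∘ T_{σ_{n-1}σ_n}` (identity for words of length `≤ 1`). -/
def Tword {E : Type*} (T : ℕ → ℕ → E → E) : List ℕ → E → E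
  | [], x => x
  | [_], x => x
  | a :: b :: t, x => T a b (Tword T (b :: t) x)

/-- the cylinder set `J_σ = T_σ (J_{σ_n})`. -/
def Jword {E : Type*} (T : ℕ → ℕ → E → E) (J : ℕ → Set E) (σ : List ℕ) : Set E :=
  Tword T σ '' J (σ.getLastD 0)

/-- the Mauldin–Williams fractal `K = ⋂_k ⋃_{σ ∈ G_k} J_σ`. -/
def attractor {E : Type*} (p : ℕ → ℕ → ℝ) (N : ℕ) (T : ℕ → ℕ → E → E) (J : ℕ → Set E) :
    Set E :=
  ⋂ n : ℕ, ⋃ σ ∈ {σ : List ℕ | isGword p N σ ∧ σ.length = n + 1}, Jword T J σ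

/-- `μ` is reducible: `μ = ν₁ ∘ π₁⁻¹` for the Markov-type measure `ν₁` associated with some
`N × N` row-stochastic matrix and positive probability vector; equivalently, the cylinder
values of `μ` are of Markov type. -/
def reducible {E : Type*} [MeasurableSpace E] (p : ℕ → ℕ → ℝ) (N : ℕ)
    (T : ℕ → ℕ → E → E) (J : ℕ → Set E) (μ : Measure E) : Prop :=
  ∃ (pt : ℕ → ℕ → ℝ) (χt : ℕ → ℝ),
    (∀ i ∈ Finset.Icc 1 N, ∀ j ∈ Finset.Icc 1 N, 0 ≤ pt i j) ∧
      (∀ i ∈ Finset.Icc 1 N, ∑ j ∈ Finset.Icc 1 N, pt i j = 1) ∧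
      (∀ i ∈ Finset.Icc 1 N, 0 < χt i) ∧
      (∑ i ∈ Finset.Icc 1 N, χt i = 1) ∧
      ∀ σ : List ℕ, isSword p N σ →
        μ (Jword T J σ) = ENNReal.ofReal (χt (σ.headD 0) * pword pt σ)

/-- `e^r_{k,r}(μ)`: the `k`-th quantization error of order `r`, to the `r`-th power. -/
def quantErr {E : Type*} [PseudoMetricSpace E] [MeasurableSpace E] (r : ℝ) (μ : Measure E)
    (k : ℕ) : ℝ :=
  sInf ((fun α : Set E => ∫ x, Metric.infDist x α ^ r ∂μ) ''
    {α : Set E | α.Nonempty ∧ α.Finite ∧ α.ncard ≤ k})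

/-- the upper quantization coefficient `Q̄_r^s(μ) = limsup_k k^{r/s} e^r_{k,r}(μ)`. -/
def upperQC {E : Type*} [PseudoMetricSpace E] [MeasurableSpace E] (r s : ℝ)
    (μ : Measure E) : ℝ≥0∞ :=
  limsup (fun k : ℕ => ENNReal.ofReal ((k : ℝ) ^ (r / s) * quantErr r μ k)) atTop

/-- the lower quantization coefficient `Q̲_r^s(μ)`. -/
def lowerQC {E : Type*} [PseudoMetricSpace E] [MeasurableSpace E] (r s : ℝ)
    (μ : Measure E) : ℝ≥0∞ :=
  liminf (fun k : ℕ => ENNReal.ofReal ((k : ℝ) ^ (r / s) * quantErr r μ k)) atTop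

/-- the upper quantization dimension `D̄_r(μ) = limsup_k log k / (-log e_{k,r}(μ))`. -/
def upperQD {E : Type*} [PseudoMetricSpace E] [MeasurableSpace E] (r : ℝ)
    (μ : Measure E) : ℝ :=
  limsup (fun k : ℕ => Real.log k / (-Real.log (quantErr r μ k ^ (1 / r)))) atTop

/-- the lower quantization dimension `D̲_r(μ)`. -/
def lowerQD {E : Type*} [PseudoMetricSpace E] [MeasurableSpace E] (r : ℝ)
    (μ : Measure E) : ℝ :=
  liminf (fun k : ℕ => Real.log k / (-Real.log (quantErr r μ k ^ (1 / r)))) atTop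

/-- spectral radius of a real matrix: the largest modulus of a complex eigenvalue. -/
def specRad {n : Type*} [Fintype n] [DecidableEq n] (M : Matrix n n ℝ) : ℝ :=
  sSup (norm '' spectrum ℂ (M.map (algebraMap ℝ ℂ)))

/-- `A₁(s) = ((p_{i,j} s_{i,j}^r)^s)_{i,j=1}^N`. -/
def matA1 (p sr : ℕ → ℕ → ℝ) (N : ℕ) (r s : ℝ) : Matrix (Fin N) (Fin N) ℝ :=
  Matrix.of fun i j => (p (i.1 + 1) (j.1 + 1) * sr (i.1 + 1) (j.1 + 1) ^ r) ^ s

/-- `A₂(s) = ((p_{i⁺,j⁺} s_{i⁺,j⁺}^r)^s)_{i,j=1}^N`. -/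
def matA2 (p sr : ℕ → ℕ → ℝ) (N : ℕ) (r s : ℝ) : Matrix (Fin N) (Fin N) ℝ :=
  Matrix.of fun i j => (p (i.1 + 1 + N) (j.1 + 1 + N) * sr (i.1 + 1 + N) (j.1 + 1 + N) ^ r) ^ s

/-- `A₃(s) = ((p_{i,j⁺} s_{i,j⁺}^r)^s)_{i,j=1}^N`. -/
def matA3 (p sr : ℕ → ℕ → ℝ) (N : ℕ) (r s : ℝ) : Matrix (Fin N) (Fin N) ℝ :=
  Matrix.of fun i j => (p (i.1 + 1) (j.1 + 1 + N) * sr (i.1 + 1) (j.1 + 1 + N) ^ r) ^ s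

/-- `A₄(s) = ((p_{i⁺,j} s_{i⁺,j}^r)^s)_{i,j=1}^N`. -/
def matA4 (p sr : ℕ → ℕ → ℝ) (N : ℕ) (r s : ℝ) : Matrix (Fin N) (Fin N) ℝ :=
  Matrix.of fun i j => (p (i.1 + 1 + N) (j.1 + 1) * sr (i.1 + 1 + N) (j.1 + 1) ^ r) ^ s

/-- the block matrix `A(s) = [[A₁(s), A₃(s)], [A₄(s), A₂(s)]]`. -/
def matA (p sr : ℕ → ℕ → ℝ) (N : ℕ) (r s : ℝ) :
    Matrix (Fin N ⊕ Fin N) (Fin N ⊕ Fin N) ℝ :=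
  Matrix.fromBlocks (matA1 p sr N r s) (matA3 p sr N r s) (matA4 p sr N r s) (matA2 p sr N r s)

/-- `p̲ = min_{(i,j) ∈ G₂} p_{i,j}`. -/
def pMin (p : ℕ → ℕ → ℝ) (N : ℕ) : ℝ :=
  sInf {x | ∃ i ∈ Finset.Icc 1 (2 * N), ∃ j ∈ Finset.Icc 1 (2 * N), 0 < p i j ∧ x = p i j}

/-- `p̄ = max_{(i,j) ∈ G₂} p_{i,j}`. -/
def pMax (p : ℕ → ℕ → ℝ) (N : ℕ) : ℝ :=
  sSup {x | ∃ i ∈ Finset.Icc 1 (2 * N), ∃ j ∈ Finset.Icc 1 (2 * N), 0 < p i j ∧ x = p i j}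

/-- `s̲ = min_{(i,j) ∈ 𝒮₂} s_{i,j}`. -/
def sMin (p sr : ℕ → ℕ → ℝ) (N : ℕ) : ℝ :=
  sInf {x | ∃ i ∈ Finset.Icc 1 N, ∃ j ∈ Finset.Icc 1 N, isSword p N [i, j] ∧ x = sr i j}

/-- `s̄ = max_{(i,j) ∈ 𝒮₂} s_{i,j}`. -/
def sMax (p sr : ℕ → ℕ → ℝ) (N : ℕ) : ℝ :=
  sSup {x | ∃ i ∈ Finset.Icc 1 N, ∃ j ∈ Finset.Icc 1 N, isSword p N [i, j] ∧ x = sr i j}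

/-- `χ̲ = min_{1 ≤ i ≤ 2N} χ_i`. -/
def chiMin (χ : ℕ → ℝ) (N : ℕ) : ℝ := sInf {x | ∃ i ∈ Finset.Icc 1 (2 * N), x = χ i}

/-- `χ̄ = max_{1 ≤ i ≤ 2N} χ_i`. -/
def chiMax (χ : ℕ → ℝ) (N : ℕ) : ℝ := sSup {x | ∃ i ∈ Finset.Icc 1 (2 * N), x = χ i}

/-- `t` satisfies the defining property of `t_r`:
`(1/n) log Σ_{σ ∈ 𝒮_n} ℰ_r(σ)^{t/(t+r)} → 0`. -/
def trCond (p : ℕ → ℕ → ℝ) (χ : ℕ → ℝ) (sr : ℕ → ℕ → ℝ) (N : ℕ) (r t : ℝ) : Prop :=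
  0 < t ∧
    Tendsto (fun n : ℕ => (n : ℝ)⁻¹ *
      Real.log (∑ σ ∈ Sn p N n, Er p χ sr N r σ ^ (t / (t + r)))) atTop (nhds 0)

/-- the initial word of length `n` of an infinite sequence. -/
def seqTake (x : ℕ → ℕ) (n : ℕ) : List ℕ := (List.range n).map x

/-- `Γ` is a finite maximal antichain among the words satisfying `W`, with respect to the
infinite sequences satisfying `Wseq`. -/
def isMaxAntichain (W : List ℕ → Prop) (Wseq : (ℕ → ℕ) → Prop) (Γ : Finset (List ℕ)) : Prop :=
  (∀ σ ∈ Γ, W σ) ∧ (∀ σ ∈ Γ, ∀ τ ∈ Γ, σ ≠ τ → ¬σ <+: τ) ∧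
    ∀ x : ℕ → ℕ, Wseq x → ∃ n : ℕ, 1 ≤ n ∧ seqTake x n ∈ Γ

/-- infinite admissible sequences with letters in `Ψ`. -/
def isH1seq (p : ℕ → ℕ → ℝ) (N : ℕ) (x : ℕ → ℕ) : Prop :=
  (∀ n, x n ∈ Finset.Icc 1 N) ∧ ∀ n, 0 < p (x n) (x (n + 1))

/-- infinite admissible sequences with letters in `Υ`. -/
def isH2seq (p : ℕ → ℕ → ℝ) (N : ℕ) (x : ℕ → ℕ) : Prop :=
  (∀ n, x n ∈ Finset.Icc (N + 1) (2 * N)) ∧ ∀ n, 0 < p (x n) (x (n + 1))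

/-- minimal length of a word in `Γ`. -/
def minLen (Γ : Finset (List ℕ)) : ℕ := sInf {n | ∃ σ ∈ Γ, σ.length = n}

/-- maximal length of a word in `Γ`. -/
def maxLen (Γ : Finset (List ℕ)) : ℕ := sSup {n | ∃ σ ∈ Γ, σ.length = n}

/-- `Λ_{k,r} = {σ ∈ 𝒮^* : ℰ_r(σ) < c₁^k ≤ ℰ_r(σ^♭)}`. -/
def LamSet (p : ℕ → ℕ → ℝ) (χ : ℕ → ℝ) (sr : ℕ → ℕ → ℝ) (N : ℕ) (r c1 : ℝ) (k : ℕ) :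
    Set (List ℕ) :=
  {σ | isSword p N σ ∧ Er p χ sr N r σ < c1 ^ k ∧ c1 ^ k ≤ Er p χ sr N r σ.dropLast}

/-- `ℒ(σ) = {σ, σ⁺} ∪ {σ|_h ∗ (σ_{h+1}⁺, …, σ_n⁺) : 1 ≤ h ≤ n − 1}`. -/
def Lset (N : ℕ) (σ : List ℕ) : Finset (List ℕ) :=
  (Finset.range (σ.length + 1)).image fun h =>
    σ.take h ++ (σ.drop h).map (fun x => x + N)

/-!
Let `A = A_i(s/(s+r))`. By Perron–Frobenius (through the Collatz–Wielandt maximum) it has a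
positive eigenvector `v` whose eigenvalue is `ρ = ρ_i(s)`. Then `q_{ab} = A_{ab} v_b / (ρ v_a)`
is stochastic, and along a word `(p_σ s_σ^r)^{s/(s+r)} · v_{σ_n} · ρ = q_σ · ρ^{|σ|} · v_{σ_1}`.
The `q`-masses of the words of a finite maximal antichain add up to its number of roots, as for
any Markov chain, so the sum is comparable to `ρ^{|σ|}` with `l(Γ) ≤ |σ| ≤ L(Γ)`. Finally
`ρ_i` is nonincreasing in `s` (all entries `p_{ab} s_{ab}^r` lie in `[0, 1]`) and
`ρ_i(s_{i,r}) = 1`, so the sign of `s - s_{i,r}` decides which of `ρ^l`, `ρ^L` is the smaller.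
-/

end MTM

namespace Matrix

open Finset

variable {ι : Type*} [Fintype ι] {A : Matrix ι ι ℝ}

theorem mul_le_mulVec_apply (hA : ∀ i j, 0 ≤ A i j) {x : ι → ℝ} (hx : 0 ≤ x) (i j : ι) :
    A i j * x j ≤ (A *ᵥ x) i :=
  Finset.single_le_sum (f := fun j => A i j * x j) (fun k _ => mul_nonneg (hA i k) (hx k))
    (mem_univ j)

theorem mulVec_apply_pos (hA : ∀ i j, 0 < A i j) {x : ι → ℝ} (hx : 0 < x) (i : ι) :
    0 < (A *ᵥ x) i := by
  obtain ⟨j, hj⟩ := (Pi.lt_def.1 hx).2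
  exact (mul_pos (hA i j) hj).trans_le (mul_le_mulVec_apply (fun i j => (hA i j).le) hx.le i j)

theorem mulVec_mono (hA : ∀ i j, 0 ≤ A i j) {x y : ι → ℝ} (hxy : x ≤ y) : A *ᵥ x ≤ A *ᵥ y :=
  fun i => Finset.sum_le_sum fun j _ => mul_le_mul_of_nonneg_left (hxy j) (hA i j)

theorem le_of_smul_le_mulVec (hA : ∀ i j, 0 ≤ A i j) {v x : ι → ℝ} {ρ θ : ℝ}
    (hv : ∀ i, 0 < v i) (hAv : A *ᵥ v = ρ • v) (hx : 0 < x) (hθ : θ • x ≤ A *ᵥ x) : θ ≤ ρ := by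
  obtain ⟨j, hj⟩ := (Pi.lt_def.1 hx).2
  obtain ⟨i, -, hi⟩ := exists_max_image univ (fun i => x i / v i) ⟨j, mem_univ j⟩
  set c := x i / v i
  have hxc : x ≤ c • v := fun k => by
    simpa [div_le_iff₀ (hv k)] using hi k (mem_univ k)
  have hxi : 0 < x i := by
    have : 0 < c := (div_pos hj (hv j)).trans_le (hi j (mem_univ j))
    exact (div_pos_iff_of_pos_right (hv i)).1 this
  have hci : c * v i = x i := div_mul_cancel₀ _ (hv i).ne'
  refine le_of_mul_le_mul_right ?_ hxi
  calc θ * x i ≤ (A *ᵥ x) i := hθ i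
    _ ≤ (A *ᵥ (c • v)) i := mulVec_mono hA hxc i
    _ = ρ * x i := by
      rw [mulVec_smul, hAv, ← hci]; simp only [Pi.smul_apply, smul_eq_mul]; ring

theorem le_sum_sum_of_smul_le_mulVec (hA : ∀ i j, 0 ≤ A i j) {x : ι → ℝ} {θ : ℝ} (hx : 0 ≤ x)
    (hx1 : ∑ i, x i = 1) (hθ : θ • x ≤ A *ᵥ x) : θ ≤ ∑ i, ∑ j, A i j :=
  calc θ = ∑ i, θ * x i := by rw [← mul_sum, hx1, mul_one]
    _ ≤ ∑ i, ∑ j, A i j * x j := sum_le_sum fun i _ => hθ i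
    _ ≤ ∑ i, ∑ j, A i j := sum_le_sum fun i _ => sum_le_sum fun j _ =>
      mul_le_of_le_one_right (hA i j) (hx1 ▸ single_le_sum (fun k _ => hx k) (mem_univ j))

/-- The Collatz–Wielandt value `ρ`, attained by compactness of the simplex. -/
theorem exists_max_smul_le_mulVec [Nonempty ι] (hA : ∀ i j, 0 ≤ A i j) :
    ∃ ρ : ℝ, ∃ v : ι → ℝ, 0 < v ∧ ρ • v ≤ A *ᵥ v ∧ ∀ θ x, 0 < x → θ • x ≤ A *ᵥ x → θ ≤ ρ := by
  set K : Set (ℝ × (ι → ℝ)) :=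
    {z | 0 ≤ z.1 ∧ 0 ≤ z.2 ∧ ∑ i, z.2 i = 1 ∧ z.1 • z.2 ≤ A *ᵥ z.2}
  have hKc : IsCompact K := by
    refine (isCompact_Icc (a := ((0 : ℝ), (0 : ι → ℝ))) (b := (∑ i, ∑ j, A i j, 1)))
      |>.of_isClosed_subset ?_ fun z hz =>
        ⟨⟨hz.1, hz.2.1⟩, le_sum_sum_of_smul_le_mulVec hA hz.2.1 hz.2.2.1 hz.2.2.2,
          fun k => show z.2 k ≤ 1 from hz.2.2.1 ▸ single_le_sum (fun i _ => hz.2.1 i) (mem_univ k)⟩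
    refine (isClosed_le continuous_const continuous_fst).inter <|
      (isClosed_le continuous_const continuous_snd).inter <|
      (isClosed_eq (continuous_finsetSum _ fun i _ => (continuous_apply i).comp continuous_snd)
        continuous_const).inter <|
      isClosed_le (continuous_fst.smul continuous_snd)
        (continuous_const.matrix_mulVec continuous_snd)
  set u : ι → ℝ := fun _ => (Fintype.card ι : ℝ)⁻¹
  have hu : (0, u) ∈ K := ⟨le_rfl, fun _ => by positivity, by simp [u], by
    simpa using mulVec_mono hA (fun _ => (by positivity : (0 : ℝ) ≤ _)) (x := 0)⟩
  obtain ⟨⟨ρ, v⟩, ⟨hρ, hv, hv1, hρv⟩, hmax⟩ :=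
    hKc.exists_isMaxOn ⟨_, hu⟩ continuous_fst.continuousOn
  refine ⟨ρ, v, hv.lt_of_ne fun h => by simp [← show (0 : ι → ℝ) = v from h] at hv1, hρv,
    fun θ x hx hθ => ?_⟩
  rcases lt_or_ge θ 0 with hθ0 | hθ0
  · exact hθ0.le.trans hρ
  have hs : 0 < ∑ i, x i := by
    obtain ⟨j, hj⟩ := (Pi.lt_def.1 hx).2
    exact hj.trans_le (single_le_sum (fun i _ => hx.le i) (mem_univ j))
  refine hmax (show (θ, (∑ i, x i)⁻¹ • x) ∈ K from ⟨hθ0, ?_, ?_, ?_⟩)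
  · exact smul_nonneg (inv_nonneg.2 hs.le) hx.le
  · simp [← mul_sum, inv_mul_cancel₀ hs.ne']
  · rw [smul_comm, mulVec_smul]
    exact smul_le_smul_of_nonneg_left hθ (inv_nonneg.2 hs.le)

theorem exists_pos_smul_le [Nonempty ι] {u w : ι → ℝ} (hu : ∀ i, 0 < u i) (hw : ∀ i, 0 < w i) :
    ∃ ε : ℝ, 0 < ε ∧ ε • u ≤ w :=
  ⟨univ.inf' univ_nonempty fun i => w i / u i,
    (lt_inf'_iff _).2 fun i _ => div_pos (hw i) (hu i),
    fun i => (le_div_iff₀ (hu i)).1 (inf'_le _ (mem_univ i))⟩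

variable [DecidableEq ι]

theorem pow_mulVec_of_mulVec_eq_smul {v : ι → ℝ} {ρ : ℝ} (h : A *ᵥ v = ρ • v) (k : ℕ) :
    (A ^ k) *ᵥ v = ρ ^ k • v := by
  induction k with
  | zero => simp
  | succ k ih => rw [pow_succ', ← mulVec_mulVec, ih, mulVec_smul, h, smul_smul, ← pow_succ]

theorem pow_apply_pos_of_isChain (hA : ∀ i j, 0 ≤ A i j) :
    ∀ (c : List ι) {i j : ι}, (i :: (c ++ [j])).IsChain (fun a b => 0 < A a b) →
      0 < (A ^ (c.length + 1)) i j
  | [], i, j, h => by simpa using h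
  | b :: c, i, j, h => by
    rw [List.cons_append, List.isChain_cons_cons] at h
    rw [List.length_cons, pow_succ', mul_apply]
    exact (mul_pos h.1 (pow_apply_pos_of_isChain hA c h.2)).trans_le
      (Finset.single_le_sum (fun l _ => mul_nonneg (hA i l) (pow_apply_nonneg hA _ l j))
        (Finset.mem_univ b))

theorem IsIrreducible.exists_sum_pow_pos (hA : A.IsIrreducible) :
    ∃ M, ∀ i j, 0 < (∑ k ∈ range M, A ^ k) i j := by
  choose K _ hK using (isIrreducible_iff_exists_pow_pos hA.nonneg).1 hA
  refine ⟨univ.sup (fun ij : ι × ι => K ij.1 ij.2) + 1, fun i j => ?_⟩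
  rw [Matrix.sum_apply]
  refine (hK i j).trans_le (single_le_sum (fun k _ => pow_apply_nonneg hA.nonneg k i j) ?_)
  exact mem_range.2 (Nat.lt_succ_of_le (le_sup (f := fun ij : ι × ι => K ij.1 ij.2)
    (mem_univ (i, j))))

theorem IsIrreducible.exists_pos_eigenvector [Nonempty ι] (hA : A.IsIrreducible) :
    ∃ ρ : ℝ, 0 < ρ ∧ ∃ v : ι → ℝ, (∀ i, 0 < v i) ∧ A *ᵥ v = ρ • v := by
  obtain ⟨ρ, v, hv, hρv, hmax⟩ := exists_max_smul_le_mulVec hA.nonneg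
  obtain ⟨M, hB⟩ := hA.exists_sum_pow_pos
  set B := ∑ k ∈ range M, A ^ k
  have hρ : 0 ≤ ρ := hmax 0 v hv (by simpa using mulVec_mono hA.nonneg hv.le (x := 0))
  -- If `A v - ρ v ≠ 0`, the positive vector `B v` is a sub-eigenvector for a larger `θ`.
  have heig : A *ᵥ v = ρ • v := by
    by_contra hne
    have hu := mulVec_apply_pos hB hv
    obtain ⟨ε, hε, hεle⟩ := exists_pos_smul_le hu
      (mulVec_apply_pos hB ((sub_nonneg.2 hρv).lt_of_ne (sub_ne_zero.2 hne).symm))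
    have hAB : A * B = B * A := (Commute.sum_right _ _ _ fun k _ => Commute.self_pow A k).eq
    have : (ρ + ε) • (B *ᵥ v) ≤ A *ᵥ (B *ᵥ v) := by
      rw [mulVec_mulVec, hAB, ← mulVec_mulVec, ← add_sub_cancel (ρ • v) (A *ᵥ v), mulVec_add,
        mulVec_smul, add_smul]
      exact add_le_add_right hεle _
    linarith [hmax _ _ (Pi.lt_def.2 ⟨fun i => (hu i).le, Classical.arbitrary ι, hu _⟩) this]
  have hBv : B *ᵥ v = (∑ k ∈ range M, ρ ^ k) • v := by
    simp only [B, sum_mulVec, pow_mulVec_of_mulVec_eq_smul heig, sum_smul]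
  have hvpos : ∀ i, 0 < v i := fun i => by
    have := mulVec_apply_pos hB hv i
    rw [hBv] at this
    exact pos_of_mul_pos_right this (sum_nonneg fun k _ => pow_nonneg hρ k)
  refine ⟨ρ, hρ.lt_of_ne fun h => ?_, v, hvpos, heig⟩
  obtain ⟨i⟩ := ‹Nonempty ι›
  obtain ⟨k, hk, hki⟩ := (isIrreducible_iff_exists_pow_pos hA.nonneg).1 hA i i
  have := (mul_pos hki (hvpos i)).trans_le
    (mul_le_mulVec_apply (pow_apply_nonneg hA.nonneg k) (fun j => (hvpos j).le) i i)
  simp [pow_mulVec_of_mulVec_eq_smul heig, ← h, zero_pow hk.ne'] at this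

theorem mem_spectrum_iff_exists_mulVec_eq_smul {K : Type*} [Field K] {M : Matrix ι ι K}
    {μ : K} : μ ∈ spectrum K M ↔ ∃ x ≠ 0, M *ᵥ x = μ • x := by
  rw [← spectrum_toLin', ← Module.End.hasEigenvalue_iff_mem_spectrum]
  constructor
  · intro h
    obtain ⟨x, hx, hx0⟩ := h.exists_hasEigenvector
    exact ⟨x, hx0, by simpa using Module.End.mem_eigenspace_iff.1 hx⟩
  · rintro ⟨x, hx0, hx⟩
    exact Module.End.hasEigenvalue_of_hasEigenvector
      ⟨Module.End.mem_eigenspace_iff.2 (by simpa using hx), hx0⟩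

end Matrix

namespace MTM

open Finset

section SpectralRadius

open Matrix

variable {ι : Type*} [Fintype ι] [DecidableEq ι] {A : Matrix ι ι ℝ}

theorem specRad_eq_of_mulVec_eq_smul [Nonempty ι] (hA : ∀ i j, 0 ≤ A i j) {v : ι → ℝ}
    {ρ : ℝ} (hv : ∀ i, 0 < v i) (hAv : A *ᵥ v = ρ • v) : specRad A = ρ := by
  obtain ⟨i⟩ := ‹Nonempty ι›
  have hρ : 0 ≤ ρ := by
    have := (mulVec_mono hA (fun j => (hv j).le) (x := 0)) i
    rw [mulVec_zero, hAv] at this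
    exact nonneg_of_mul_nonneg_left this (hv i)
  refine IsGreatest.csSup_eq ⟨⟨ρ, mem_spectrum_iff_exists_mulVec_eq_smul.2
    ⟨fun j => (v j : ℂ), fun h => (hv i).ne' (by simpa using congrFun h i), funext fun j => ?_⟩,
    by simp [hρ]⟩, ?_⟩
  · have := congrArg (algebraMap ℝ ℂ) (congrFun hAv j)
    rw [RingHom.map_mulVec] at this
    simpa [Function.comp_def] using this
  rintro _ ⟨μ, hμ, rfl⟩
  obtain ⟨x, hx0, hx⟩ := mem_spectrum_iff_exists_mulVec_eq_smul.1 hμ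
  refine le_of_smul_le_mulVec hA hv hAv (x := fun j => ‖x j‖) (Pi.lt_def.2
    ⟨fun j => norm_nonneg _, (Function.ne_iff.1 hx0).imp fun j hj => norm_pos_iff.2 hj⟩) fun j => ?_
  calc ‖μ‖ * ‖x j‖ = ‖(A.map (algebraMap ℝ ℂ) *ᵥ x) j‖ := by
        rw [hx, Pi.smul_apply, smul_eq_mul, norm_mul]
    _ ≤ ∑ k, ‖A.map (algebraMap ℝ ℂ) j k * x k‖ := norm_sum_le _ _
    _ = (A *ᵥ fun k => ‖x k‖) j := by
      simp [mulVec, dotProduct, Complex.norm_real, abs_of_nonneg (hA _ _)]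

theorem specRad_pos [Nonempty ι] (hA : A.IsIrreducible) : 0 < specRad A := by
  obtain ⟨ρ, hρ, v, hv, hAv⟩ := hA.exists_pos_eigenvector
  rwa [specRad_eq_of_mulVec_eq_smul hA.nonneg hv hAv]

theorem specRad_le_specRad [Nonempty ι] {B : Matrix ι ι ℝ} (hA : A.IsIrreducible)
    (hB : B.IsIrreducible) (hAB : ∀ i j, A i j ≤ B i j) : specRad A ≤ specRad B := by
  obtain ⟨ρ, -, v, hv, hAv⟩ := hA.exists_pos_eigenvector
  obtain ⟨ρ', -, w, hw, hBw⟩ := hB.exists_pos_eigenvector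
  rw [specRad_eq_of_mulVec_eq_smul hA.nonneg hv hAv, specRad_eq_of_mulVec_eq_smul hB.nonneg hw hBw]
  refine le_of_smul_le_mulVec hB.nonneg hw hBw
    (Pi.lt_def.2 ⟨fun j => (hv j).le, Classical.arbitrary ι, hv _⟩) ?_
  rw [← hAv]
  exact fun i => sum_le_sum fun j _ => mul_le_mul_of_nonneg_right (hAB i j) (hv j).le

end SpectralRadius

section Words

variable {S : Finset ℕ} {q : ℕ → ℕ → ℝ}

theorem pword_append_singleton (w : ℕ → ℕ → ℝ) {σ : List ℕ} (hσ : σ ≠ []) (a : ℕ) :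
    pword w (σ ++ [a]) = pword w σ * w (σ.getLast hσ) a := by
  induction σ with
  | nil => exact absurd rfl hσ
  | cons b t ih =>
    cases t with
    | nil => simp [pword]
    | cons c t =>
      have ih' := ih (List.cons_ne_nil c t)
      rw [List.cons_append] at ih'
      rw [List.getLast_cons (List.cons_ne_nil c t), List.cons_append, List.cons_append, pword, ih',
        pword, mul_assoc]

theorem isChain_of_pword_ne_zero (hq : ∀ a ∈ S, ∀ b ∈ S, 0 ≤ q a b) {τ : List ℕ}
    (hτS : ∀ x ∈ τ, x ∈ S) (h : pword q τ ≠ 0) : τ.IsChain fun a b => 0 < q a b := by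
  induction τ with
  | nil => exact .nil
  | cons a t ih =>
    cases t with
    | nil => exact .singleton a
    | cons b t =>
      rw [pword, mul_ne_zero_iff] at h
      exact .cons_cons ((hq a (hτS a (by simp)) b (hτS b (by simp))).lt_of_ne' h.1)
        (ih (fun x hx => hτS x (List.mem_cons_of_mem a hx)) h.2)

theorem mem_wordsOfLen {n : ℕ} {l : List ℕ} :
    l ∈ wordsOfLen S n ↔ l.length = n ∧ ∀ x ∈ l, x ∈ S := by
  induction n generalizing l with
  | zero =>
    simp only [wordsOfLen, mem_singleton, List.length_eq_zero_iff, iff_self_and]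
    rintro rfl
    simp
  | succ n ih =>
    cases l with
    | nil => simp [wordsOfLen]
    | cons a l => simp [wordsOfLen, ih]; tauto

theorem sum_wordsOfLen_succ {n : ℕ} (f : List ℕ → ℝ) :
    ∑ l ∈ wordsOfLen S (n + 1), f l = ∑ a ∈ S, ∑ l ∈ wordsOfLen S n, f (a :: l) := by
  rw [wordsOfLen, sum_biUnion, sum_comm]
  · exact sum_congr rfl fun l _ => sum_image fun a _ b _ h => (List.cons.inj h).1
  · intro l _ l' _ hne
    simp only [Function.onFun, disjoint_left, mem_image]
    rintro _ ⟨a, -, rfl⟩ ⟨b, -, h⟩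
    exact hne (List.cons.inj h).2.symm

theorem sum_pword_append_wordsOfLen (hq : ∀ a ∈ S, ∑ b ∈ S, q a b = 1) (n : ℕ) {σ : List ℕ}
    (hσ : σ ≠ []) (hσS : ∀ x ∈ σ, x ∈ S) :
    ∑ l ∈ wordsOfLen S n, pword q (σ ++ l) = pword q σ := by
  induction n generalizing σ with
  | zero => simp [wordsOfLen]
  | succ n ih =>
    rw [sum_wordsOfLen_succ]
    calc ∑ a ∈ S, ∑ l ∈ wordsOfLen S n, pword q (σ ++ a :: l)
        = ∑ a ∈ S, pword q (σ ++ [a]) := sum_congr rfl fun a ha => by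
          simpa using ih (σ := σ ++ [a]) (by simp) (by simpa [or_imp, forall_and] using ⟨hσS, ha⟩)
      _ = pword q σ := by
          simp_rw [pword_append_singleton q hσ, ← mul_sum, hq _ (hσS _ (List.getLast_mem hσ)),
            mul_one]

theorem filter_prefix_wordsOfLen {σ : List ℕ} (hσS : ∀ x ∈ σ, x ∈ S) {n : ℕ}
    (hn : σ.length ≤ n) :
    {τ ∈ wordsOfLen S n | σ <+: τ} = (wordsOfLen S (n - σ.length)).image (σ ++ ·) := by
  ext τ
  simp only [mem_filter, mem_image, mem_wordsOfLen]
  constructor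
  · rintro ⟨⟨hlen, hS⟩, l, rfl⟩
    exact ⟨l, ⟨by simp at hlen; omega, fun x hx => hS x (by simp [hx])⟩, rfl⟩
  · rintro ⟨l, ⟨hlen, hS⟩, rfl⟩
    refine ⟨⟨by simp; omega, fun x hx => ?_⟩, List.prefix_append _ _⟩
    rcases List.mem_append.1 hx with hx | hx
    exacts [hσS x hx, hS x hx]

theorem sum_pword_filter_prefix (hq : ∀ a ∈ S, ∑ b ∈ S, q a b = 1) {σ : List ℕ} (hσ : σ ≠ [])
    (hσS : ∀ x ∈ σ, x ∈ S) {n : ℕ} (hn : σ.length ≤ n) :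
    ∑ τ ∈ wordsOfLen S n with σ <+: τ, pword q τ = pword q σ := by
  rw [filter_prefix_wordsOfLen hσS hn, sum_image fun _ _ _ _ h => List.append_cancel_left h,
    sum_pword_append_wordsOfLen hq _ hσ hσS]

theorem singleton_prefix_iff_headD {j : ℕ} {σ : List ℕ} (hσ : σ ≠ []) :
    [j] <+: σ ↔ σ.headD 0 = j := by
  cases σ with
  | nil => exact absurd rfl hσ
  | cons a t => simp [eq_comm]

end Words

section Sequences

theorem seqTake_length (x : ℕ → ℕ) (n : ℕ) : (seqTake x n).length = n := by
  simp [seqTake]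

theorem take_seqTake (x : ℕ → ℕ) {m n : ℕ} (h : n ≤ m) : (seqTake x m).take n = seqTake x n := by
  simp [seqTake, ← List.map_take, List.take_range, Nat.min_eq_left h]

theorem headD_seqTake (x : ℕ → ℕ) {n : ℕ} (hn : n ≠ 0) : (seqTake x n).headD 0 = x 0 := by
  obtain ⟨n, rfl⟩ := Nat.exists_eq_succ_of_ne_zero hn
  simp [seqTake, List.range_succ_eq_map]

theorem exists_seq_extending {R : ℕ → ℕ → Prop} {S : Finset ℕ} (hR : ∀ a ∈ S, ∃ b ∈ S, R a b)
    {τ : List ℕ} (hτ : τ ≠ []) (hτS : ∀ x ∈ τ, x ∈ S) (hτR : τ.IsChain R) :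
    ∃ x : ℕ → ℕ, (∀ n, x n ∈ S) ∧ (∀ n, R (x n) (x (n + 1))) ∧ seqTake x τ.length = τ := by
  choose! f hfS hfR using hR
  set a := τ.getLast hτ
  have ha : a ∈ S := hτS _ (List.getLast_mem hτ)
  have hiter : ∀ k, f^[k] a ∈ S := fun k => Set.MapsTo.iterate (s := ↑S) (fun b hb => hfS b hb) k ha
  refine ⟨fun n => if h : n < τ.length then τ[n] else f^[n + 1 - τ.length] a, fun n => ?_,
    fun n => ?_, ?_⟩
  · dsimp only
    split_ifs
    exacts [hτS _ (List.getElem_mem _), hiter _]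
  · dsimp only
    by_cases h1 : n + 1 < τ.length
    · rw [dif_pos h1, dif_pos (by omega)]
      exact List.isChain_iff_getElem.1 hτR n h1
    rw [dif_neg h1]
    by_cases h0 : n < τ.length
    · have : τ[n] = a := by simp only [a, List.getLast_eq_getElem]; congr; omega
      rw [dif_pos h0, this, show n + 1 + 1 - τ.length = 1 by omega]
      exact hfR a ha
    · rw [dif_neg h0, show n + 1 + 1 - τ.length = (n + 1 - τ.length) + 1 by omega,
        Function.iterate_succ_apply']
      exact hfR _ (hiter _)
  · exact List.ext_getElem (seqTake_length _ _) fun i h1 h2 => by simp [seqTake, h2]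

end Sequences

/-- A finite maximal antichain in `H_i^*` (`roots = S`) or in `H_i^*(j)` (`roots = {j}`). -/
structure IsRootedMaxAntichain (R : ℕ → ℕ → Prop) (S roots : Finset ℕ)
    (Γ : Finset (List ℕ)) : Prop where
  ne_nil : ∀ σ ∈ Γ, σ ≠ []
  subset : ∀ σ ∈ Γ, ∀ x ∈ σ, x ∈ S
  isChain : ∀ σ ∈ Γ, σ.IsChain R
  headD_mem : ∀ σ ∈ Γ, σ.headD 0 ∈ roots
  antichain : ∀ σ ∈ Γ, ∀ τ ∈ Γ, σ ≠ τ → ¬σ <+: τ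
  maximal : ∀ x : ℕ → ℕ, x 0 ∈ roots → (∀ n, x n ∈ S) → (∀ n, R (x n) (x (n + 1))) →
    ∃ n, 1 ≤ n ∧ seqTake x n ∈ Γ

namespace IsRootedMaxAntichain

variable {R : ℕ → ℕ → Prop} {S roots : Finset ℕ} {Γ : Finset (List ℕ)}

theorem congr_rel {R' : ℕ → ℕ → Prop} (hΓ : IsRootedMaxAntichain R S roots Γ)
    (hRR' : ∀ a ∈ S, ∀ b ∈ S, R a b ↔ R' a b) :
    IsRootedMaxAntichain R' S roots Γ where
  ne_nil := hΓ.ne_nil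
  subset := hΓ.subset
  isChain σ hσ := (List.IsChain.iff_mem.1 (hΓ.isChain σ hσ)).imp fun a b h =>
    (hRR' a (hΓ.subset σ hσ a h.1) b (hΓ.subset σ hσ b h.2.1)).1 h.2.2
  headD_mem := hΓ.headD_mem
  antichain := hΓ.antichain
  maximal x hx0 hxS hxR := hΓ.maximal x hx0 hxS fun n =>
    (hRR' _ (hxS n) _ (hxS (n + 1))).2 (hxR n)

theorem exists_mem_prefix (hΓ : IsRootedMaxAntichain R S roots Γ)
    (hR : ∀ a ∈ S, ∃ b ∈ S, R a b) {τ : List ℕ} (hτ : τ ≠ []) (hτS : ∀ x ∈ τ, x ∈ S)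
    (hτR : τ.IsChain R) (hroot : τ.headD 0 ∈ roots) (hlen : ∀ σ ∈ Γ, σ.length ≤ τ.length) :
    ∃ σ ∈ Γ, σ <+: τ := by
  obtain ⟨x, hxS, hxR, hxτ⟩ := exists_seq_extending hR hτ hτS hτR
  have hx0 : x 0 = τ.headD 0 := by
    rw [← hxτ, headD_seqTake x (List.length_pos_iff.2 hτ).ne']
  obtain ⟨n, -, hn⟩ := hΓ.maximal x (hx0 ▸ hroot) hxS hxR
  refine ⟨_, hn, ?_⟩
  rw [← take_seqTake x (seqTake_length x n ▸ hlen _ hn), hxτ]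
  exact List.take_prefix _ _

theorem eq_of_prefix (hΓ : IsRootedMaxAntichain R S roots Γ) {σ σ' τ : List ℕ} (hσ : σ ∈ Γ)
    (hσ' : σ' ∈ Γ) (hστ : σ <+: τ) (hσ'τ : σ' <+: τ) : σ = σ' := by
  by_contra hne
  rcases le_total σ.length σ'.length with h | h
  · exact hΓ.antichain σ hσ σ' hσ' hne (List.prefix_of_prefix_length_le hστ hσ'τ h)
  · exact hΓ.antichain σ' hσ' σ hσ (Ne.symm hne) (List.prefix_of_prefix_length_le hσ'τ hστ h)

variable {q : ℕ → ℕ → ℝ}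

/-- A word of positive `q`-mass from the root `j`, at least as long as the words of `Γ`, has
exactly one prefix in `Γ`. -/
theorem sum_filter_headD_ite_prefix (hq : ∀ a ∈ S, ∀ b ∈ S, 0 ≤ q a b)
    (hsucc : ∀ a ∈ S, ∃ b ∈ S, 0 < q a b)
    (hΓ : IsRootedMaxAntichain (fun a b => 0 < q a b) S roots Γ) {j : ℕ} (hj : j ∈ roots)
    {τ : List ℕ} (hτS : ∀ x ∈ τ, x ∈ S) (hlen : ∀ σ ∈ Γ, σ.length ≤ τ.length) :
    ∑ σ ∈ Γ with σ.headD 0 = j, (if σ <+: τ then pword q τ else 0) =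
      if [j] <+: τ then pword q τ else 0 := by
  have hjσ : ∀ σ ∈ {σ ∈ Γ | σ.headD 0 = j}, [j] <+: σ := fun σ hσ =>
    (singleton_prefix_iff_headD (hΓ.ne_nil σ (mem_filter.1 hσ).1)).2 (mem_filter.1 hσ).2
  by_cases hjτ : [j] <+: τ
  swap
  · rw [if_neg hjτ]
    exact sum_eq_zero fun σ hσ => if_neg fun hστ => hjτ ((hjσ σ hσ).trans hστ)
  by_cases hqτ : pword q τ = 0
  · simp [hqτ]
  have hτ : τ ≠ [] := List.ne_nil_of_length_pos (hjτ.length_le.trans_lt' Nat.one_pos)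
  obtain ⟨σ, hσΓ, hστ⟩ := hΓ.exists_mem_prefix hsucc hτ hτS
    (isChain_of_pword_ne_zero hq hτS hqτ)
    ((singleton_prefix_iff_headD hτ).1 hjτ ▸ hj) hlen
  have hσj : σ.headD 0 = j := (singleton_prefix_iff_headD (hΓ.ne_nil σ hσΓ)).1 <|
    List.prefix_of_prefix_length_le hjτ hστ (List.length_pos_iff.2 (hΓ.ne_nil σ hσΓ))
  rw [if_pos hjτ, sum_eq_single_of_mem σ (mem_filter.2 ⟨hσΓ, hσj⟩) fun σ' hσ' hne =>
    if_neg fun hσ'τ => hne (hΓ.eq_of_prefix (mem_filter.1 hσ').1 hσΓ hσ'τ hστ), if_pos hστ]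

/-- `1` is the mass of all words of a fixed large length from `j`, grouped by their unique
prefix in `Γ`. -/
theorem sum_pword_filter_headD (hq0 : ∀ a ∈ S, ∀ b ∈ S, 0 ≤ q a b)
    (hq1 : ∀ a ∈ S, ∑ b ∈ S, q a b = 1) (hroots : roots ⊆ S)
    (hΓ : IsRootedMaxAntichain (fun a b => 0 < q a b) S roots Γ) {j : ℕ} (hj : j ∈ roots) :
    ∑ σ ∈ Γ with σ.headD 0 = j, pword q σ = 1 := by
  have hsucc : ∀ a ∈ S, ∃ b ∈ S, 0 < q a b := fun a ha => by
    by_contra! h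
    linarith [hq1 a ha, sum_nonpos h]
  set M := Γ.sup List.length + 1
  have hΓM : ∀ σ ∈ Γ, σ.length ≤ M := fun σ hσ => Nat.le_succ_of_le (le_sup hσ)
  calc ∑ σ ∈ Γ with σ.headD 0 = j, pword q σ
      = ∑ σ ∈ Γ with σ.headD 0 = j, ∑ τ ∈ wordsOfLen S M with σ <+: τ, pword q τ :=
        sum_congr rfl fun σ hσ => (sum_pword_filter_prefix hq1 (hΓ.ne_nil σ (mem_filter.1 hσ).1)
          (hΓ.subset σ (mem_filter.1 hσ).1) (hΓM σ (mem_filter.1 hσ).1)).symm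
    _ = ∑ τ ∈ wordsOfLen S M, ∑ σ ∈ Γ with σ.headD 0 = j, if σ <+: τ then pword q τ else 0 := by
        simp_rw [sum_filter (p := (· <+: ·) _)]
        exact sum_comm
    _ = ∑ τ ∈ wordsOfLen S M with [j] <+: τ, pword q τ := by
        rw [sum_filter]
        refine sum_congr rfl fun τ hτ => ?_
        obtain ⟨hτM, hτS⟩ := mem_wordsOfLen.1 hτ
        exact hΓ.sum_filter_headD_ite_prefix hq0 hsucc hj hτS fun σ hσ => hτM ▸ hΓM σ hσ
    _ = 1 := sum_pword_filter_prefix hq1 (List.cons_ne_nil j []) (by simpa using hroots hj)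
        (by simp [M])

theorem sum_pword_eq_card (hq0 : ∀ a ∈ S, ∀ b ∈ S, 0 ≤ q a b)
    (hq1 : ∀ a ∈ S, ∑ b ∈ S, q a b = 1) (hroots : roots ⊆ S)
    (hΓ : IsRootedMaxAntichain (fun a b => 0 < q a b) S roots Γ) :
    ∑ σ ∈ Γ, pword q σ = roots.card := by
  rw [← sum_fiberwise_of_maps_to hΓ.headD_mem, card_eq_sum_ones, Nat.cast_sum]
  exact sum_congr rfl fun j hj => by rw [hΓ.sum_pword_filter_headD hq0 hq1 hroots hj, Nat.cast_one]

end IsRootedMaxAntichain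

section Weights

theorem pword_nonneg {S : Finset ℕ} {q : ℕ → ℕ → ℝ} (hq : ∀ a ∈ S, ∀ b ∈ S, 0 ≤ q a b)
    {σ : List ℕ} (hσS : ∀ x ∈ σ, x ∈ S) : 0 ≤ pword q σ := by
  induction σ with
  | nil => simp [pword]
  | cons a t ih =>
    cases t with
    | nil => simp [pword]
    | cons b t =>
      exact mul_nonneg (hq a (hσS a (by simp)) b (hσS b (by simp)))
        (ih fun x hx => hσS x (List.mem_cons_of_mem a hx))

variable {S : Finset ℕ} {w q : ℕ → ℕ → ℝ} {v : ℕ → ℝ} {ρ : ℝ}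

/-- If `w = ρ D q D⁻¹` with `D = diag v`, the products along a word telescope. -/
theorem pword_mul_eq_of_similar (hwq : ∀ a ∈ S, ∀ b ∈ S, w a b * v b = ρ * q a b * v a)
    {σ : List ℕ} (hσ : σ ≠ []) (hσS : ∀ x ∈ σ, x ∈ S) :
    pword w σ * v (σ.getLast hσ) * ρ = pword q σ * ρ ^ σ.length * v (σ.head hσ) := by
  induction σ with
  | nil => exact absurd rfl hσ
  | cons a t ih =>
    cases t with
    | nil => simp [pword]; ring
    | cons b t =>
      have ih' := ih (List.cons_ne_nil b t) fun x hx => hσS x (List.mem_cons_of_mem a hx)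
      have hab := hwq a (hσS a (by simp)) b (hσS b (by simp))
      simp only [pword, List.getLast_cons (List.cons_ne_nil b t), List.head_cons,
        List.length_cons] at ih' ⊢
      linear_combination w a b * ih' + pword q (b :: t) * ρ ^ (t.length + 1) * hab

theorem pword_bounds_of_similar (hwq : ∀ a ∈ S, ∀ b ∈ S, w a b * v b = ρ * q a b * v a)
    (hq : ∀ a ∈ S, ∀ b ∈ S, 0 ≤ q a b) (hρ : 0 < ρ) {m M : ℝ} (hm : 0 < m)
    (hv : ∀ a ∈ S, m ≤ v a ∧ v a ≤ M) {σ : List ℕ} (hσ : σ ≠ []) (hσS : ∀ x ∈ σ, x ∈ S) :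
    m / (M * ρ) * (pword q σ * ρ ^ σ.length) ≤ pword w σ ∧
      pword w σ ≤ M / (m * ρ) * (pword q σ * ρ ^ σ.length) := by
  have hX : 0 ≤ pword q σ * ρ ^ σ.length := mul_nonneg (pword_nonneg hq hσS) (by positivity)
  obtain ⟨hmh, hhM⟩ := hv _ (hσS _ (List.head_mem hσ))
  obtain ⟨hml, hlM⟩ := hv _ (hσS _ (List.getLast_mem hσ))
  have hw : pword w σ = pword q σ * ρ ^ σ.length * v (σ.head hσ) / (v (σ.getLast hσ) * ρ) := by
    rw [eq_div_iff (mul_pos (hm.trans_le hml) hρ).ne', ← mul_assoc,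
      pword_mul_eq_of_similar hwq hσ hσS]
  rw [hw]
  constructor
  · rw [mul_comm, mul_div_assoc']
    exact div_le_div₀ (mul_nonneg hX (hm.le.trans hmh)) (mul_le_mul_of_nonneg_left hmh hX)
      (mul_pos (hm.trans_le hml) hρ) (mul_le_mul_of_nonneg_right hlM hρ.le)
  · rw [mul_comm (M / _), mul_div_assoc']
    exact div_le_div₀ (mul_nonneg hX (hm.le.trans (hmh.trans hhM)))
      (mul_le_mul_of_nonneg_left hhM hX) (mul_pos hm hρ) (mul_le_mul_of_nonneg_right hml hρ.le)

theorem minLen_le {Γ : Finset (List ℕ)} {σ : List ℕ} (hσ : σ ∈ Γ) : minLen Γ ≤ σ.length :=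
  Nat.sInf_le ⟨σ, hσ, rfl⟩

theorem le_maxLen {Γ : Finset (List ℕ)} {σ : List ℕ} (hσ : σ ∈ Γ) : σ.length ≤ maxLen Γ :=
  le_csSup ⟨Γ.sup List.length, by rintro _ ⟨τ, hτ, rfl⟩; exact le_sup hτ⟩ ⟨σ, hσ, rfl⟩

theorem sum_pword_bounds_of_similar (hwq : ∀ a ∈ S, ∀ b ∈ S, w a b * v b = ρ * q a b * v a)
    (hq : ∀ a ∈ S, ∀ b ∈ S, 0 ≤ q a b) (hρ : 0 < ρ) {m M : ℝ} (hm : 0 < m)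
    (hv : ∀ a ∈ S, m ≤ v a ∧ v a ≤ M) {Γ : Finset (List ℕ)} (hΓ : ∀ σ ∈ Γ, σ ≠ [])
    (hΓS : ∀ σ ∈ Γ, ∀ x ∈ σ, x ∈ S) (hmass : 1 ≤ ∑ σ ∈ Γ, pword q σ)
    (hmass' : ∑ σ ∈ Γ, pword q σ ≤ S.card) {l L : ℕ}
    (hlen : ∀ σ ∈ Γ, ρ ^ l ≤ ρ ^ σ.length ∧ ρ ^ σ.length ≤ ρ ^ L) :
    m / (M * ρ) * ρ ^ l ≤ ∑ σ ∈ Γ, pword w σ ∧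
      ∑ σ ∈ Γ, pword w σ ≤ M / (m * ρ) * S.card * ρ ^ L := by
  obtain ⟨σ₀, hσ₀⟩ := nonempty_of_sum_ne_zero (ne_of_gt (zero_lt_one.trans_le hmass))
  have hM : 0 < M := hm.trans_le ((hv _ (hΓS σ₀ hσ₀ _ (List.head_mem (hΓ σ₀ hσ₀)))).1.trans
    (hv _ (hΓS σ₀ hσ₀ _ (List.head_mem (hΓ σ₀ hσ₀)))).2)
  have hbd σ (hσ : σ ∈ Γ) := pword_bounds_of_similar hwq hq hρ hm hv (hΓ σ hσ) (hΓS σ hσ)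
  have hqσ σ (hσ : σ ∈ Γ) : 0 ≤ pword q σ := pword_nonneg hq (hΓS σ hσ)
  constructor
  · calc m / (M * ρ) * ρ ^ l ≤ m / (M * ρ) * ρ ^ l * ∑ σ ∈ Γ, pword q σ :=
          le_mul_of_one_le_right (by positivity) hmass
      _ = ∑ σ ∈ Γ, m / (M * ρ) * (pword q σ * ρ ^ l) := by
          rw [mul_sum]; exact sum_congr rfl fun σ _ => by ring
      _ ≤ ∑ σ ∈ Γ, pword w σ := sum_le_sum fun σ hσ => le_trans
          (mul_le_mul_of_nonneg_left (mul_le_mul_of_nonneg_left (hlen σ hσ).1 (hqσ σ hσ))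
            (by positivity)) (hbd σ hσ).1
  · calc ∑ σ ∈ Γ, pword w σ ≤ ∑ σ ∈ Γ, M / (m * ρ) * (pword q σ * ρ ^ L) :=
          sum_le_sum fun σ hσ => (hbd σ hσ).2.trans
            (mul_le_mul_of_nonneg_left (mul_le_mul_of_nonneg_left (hlen σ hσ).2 (hqσ σ hσ))
              (by positivity))
      _ = M / (m * ρ) * ρ ^ L * ∑ σ ∈ Γ, pword q σ := by
          rw [mul_sum]; exact sum_congr rfl fun σ _ => by ring
      _ ≤ M / (m * ρ) * S.card * ρ ^ L := by
          rw [mul_right_comm]; gcongr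

/-- Normalising `W` by a positive eigenvector `v` gives a stochastic `q`, for which every
maximal antichain has mass `card roots`; `pword W σ` is `ρ ^ σ.length * pword q σ` up to
factors bounded in terms of `v`. -/
theorem exists_bounds_sum_pword {S : Finset ℕ} (hS : S.Nonempty) {W : ℕ → ℕ → ℝ} {v : ℕ → ℝ}
    {ρ : ℝ} (hW : ∀ a ∈ S, ∀ b ∈ S, 0 ≤ W a b) (hρ : 0 < ρ) (hv : ∀ a ∈ S, 0 < v a)
    (heig : ∀ a ∈ S, ∑ b ∈ S, W a b * v b = ρ * v a) :
    ∃ c C : ℝ, 0 < c ∧ 0 < C ∧ ∀ (roots : Finset ℕ) (Γ : Finset (List ℕ)), roots ⊆ S →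
      roots.Nonempty → IsRootedMaxAntichain (fun a b => 0 < W a b) S roots Γ →
      ∀ l L : ℕ, (∀ σ ∈ Γ, ρ ^ l ≤ ρ ^ σ.length ∧ ρ ^ σ.length ≤ ρ ^ L) →
        c * ρ ^ l ≤ ∑ σ ∈ Γ, pword W σ ∧ ∑ σ ∈ Γ, pword W σ ≤ C * ρ ^ L := by
  set m := S.inf' hS v
  set M := S.sup' hS v
  have hm : 0 < m := (lt_inf'_iff hS).2 hv
  have hM : 0 < M := hm.trans_le ((inf'_le v hS.choose_spec).trans (le_sup' v hS.choose_spec))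
  set q : ℕ → ℕ → ℝ := fun a b => W a b * v b / (ρ * v a)
  have hq0 : ∀ a ∈ S, ∀ b ∈ S, 0 ≤ q a b := fun a ha b hb =>
    div_nonneg (mul_nonneg (hW a ha b hb) (hv b hb).le) (mul_pos hρ (hv a ha)).le
  have hq1 : ∀ a ∈ S, ∑ b ∈ S, q a b = 1 := fun a ha => by
    rw [← sum_div, heig a ha, div_self (mul_pos hρ (hv a ha)).ne']
  have hWq : ∀ a ∈ S, ∀ b ∈ S, W a b * v b = ρ * q a b * v a := fun a ha b hb => by
    simp only [q]; field_simp [(hv a ha).ne']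
  refine ⟨m / (M * ρ), M / (m * ρ) * S.card, by positivity, by positivity,
    fun roots Γ hroots hne hΓ l L hlen => ?_⟩
  have hmass : ∑ σ ∈ Γ, pword q σ = roots.card :=
    (hΓ.congr_rel fun a ha b hb => by
      simp only [q, div_pos_iff_of_pos_right (mul_pos hρ (hv a ha)),
        mul_pos_iff_of_pos_right (hv b hb)]).sum_pword_eq_card hq0 hq1 hroots
  exact sum_pword_bounds_of_similar hWq hq0 hρ hm (fun a ha => ⟨inf'_le v ha, le_sup' v ha⟩)
    hΓ.ne_nil hΓ.subset (hmass ▸ Nat.one_le_cast.2 (card_pos.2 hne))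
    (hmass ▸ Nat.cast_le.2 (card_le_card hroots)) hlen

theorem exists_bounds_sum_pword_of_isIrreducible {ι : Type*} [Fintype ι] [DecidableEq ι]
    [Nonempty ι] {e : ι → ℕ} (he : Function.Injective e) {S : Finset ℕ}
    (hS : univ.image e = S) {W : ℕ → ℕ → ℝ} {A : Matrix ι ι ℝ}
    (hA : ∀ i j, A i j = W (e i) (e j)) (hirr : A.IsIrreducible) :
    ∃ c C : ℝ, 0 < c ∧ 0 < C ∧ ∀ (roots : Finset ℕ) (Γ : Finset (List ℕ)), roots ⊆ S →
      roots.Nonempty → IsRootedMaxAntichain (fun a b => 0 < W a b) S roots Γ →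
      ∀ l L : ℕ, (∀ σ ∈ Γ, specRad A ^ l ≤ specRad A ^ σ.length ∧
        specRad A ^ σ.length ≤ specRad A ^ L) →
        c * specRad A ^ l ≤ ∑ σ ∈ Γ, pword W σ ∧ ∑ σ ∈ Γ, pword W σ ≤ C * specRad A ^ L := by
  obtain ⟨ρ, hρ, v, hv, hAv⟩ := hirr.exists_pos_eigenvector
  rw [specRad_eq_of_mulVec_eq_smul hirr.nonneg hv hAv]
  subst hS
  have hinv : ∀ i, Function.invFun e (e i) = i := Function.leftInverse_invFun he
  refine exists_bounds_sum_pword (univ_nonempty.image e) ?_ hρ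
    (v := fun a => v (Function.invFun e a)) (fun a _ => hv _) ?_
  · simp only [mem_image, mem_univ, true_and]
    rintro _ ⟨i, rfl⟩ _ ⟨j, rfl⟩
    exact hA i j ▸ hirr.nonneg i j
  · simp only [mem_image, mem_univ, true_and]
    rintro _ ⟨i, rfl⟩
    rw [sum_image he.injOn]
    simpa [hinv, hA, Matrix.mulVec, dotProduct] using congrFun hAv i

end Weights

section Blocks

theorem isIrreducible_of_irreducibleOn {N k : ℕ} {p : ℕ → ℕ → ℝ}
    (hirr : irreducibleOn (fun a b => p (a + k) (b + k)) (Icc 1 N))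
    {A : Matrix (Fin N) (Fin N) ℝ} (hA : ∀ i j, 0 ≤ A i j)
    (hpos : ∀ i j : Fin N, 0 < p (i.1 + 1 + k) (j.1 + 1 + k) → 0 < A i j) :
    A.IsIrreducible := by
  rw [Matrix.isIrreducible_iff_exists_pow_pos hA]
  intro i j
  have hN : 0 < N := i.pos
  set d : ℕ → Fin N := fun a => ⟨(a - 1) % N, Nat.mod_lt _ hN⟩
  have hd : ∀ a ∈ Icc 1 N, (d a).1 + 1 = a := fun a ha => by
    rw [mem_Icc] at ha
    simp only [d, Nat.mod_eq_of_lt (by omega : a - 1 < N)]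
    omega
  have hdi : ∀ i : Fin N, d (i.1 + 1) = i := fun i => Fin.ext (by simp [d, Nat.mod_eq_of_lt i.2])
  have hi : i.1 + 1 ∈ Icc 1 N := mem_Icc.2 ⟨by omega, i.2⟩
  have hj : j.1 + 1 ∈ Icc 1 N := mem_Icc.2 ⟨by omega, j.2⟩
  obtain ⟨c, hcS, hc⟩ := hirr _ hi _ hj
  have hmem : ∀ x ∈ (i.1 + 1) :: (c ++ [j.1 + 1]), x ∈ Icc 1 N := by
    simp only [List.mem_cons, List.mem_append, List.not_mem_nil, or_false]
    rintro x (rfl | hx | rfl)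
    exacts [hi, hcS x hx, hj]
  have hchain : ((i.1 + 1) :: (c ++ [j.1 + 1])).IsChain fun a b => 0 < A (d a) (d b) :=
    (List.IsChain.iff_mem.1 hc).imp fun a b ⟨ha, hb, hab⟩ => hpos _ _ <| by
      rwa [hd a (hmem a ha), hd b (hmem b hb)]
  refine ⟨(c.map d).length + 1, Nat.succ_pos _, Matrix.pow_apply_pos_of_isChain hA _ ?_⟩
  simpa [hdi] using (List.isChain_map (R := fun a b => 0 < A a b) d).2 hchain

theorem rpow_pword_mul_sword {p sr : ℕ → ℕ → ℝ} (r t : ℝ) {σ : List ℕ}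
    (hσ : σ.IsChain fun a b => 0 ≤ p a b ∧ 0 < sr a b) :
    (pword p σ * sword sr σ ^ r) ^ t = pword (fun a b => (p a b * sr a b ^ r) ^ t) σ := by
  have : 0 ≤ pword p σ ∧ 0 < sword sr σ ∧
      (pword p σ * sword sr σ ^ r) ^ t = pword (fun a b => (p a b * sr a b ^ r) ^ t) σ := by
    induction hσ with
    | nil => simp [pword, sword]
    | singleton => simp [pword, sword]
    | @cons_cons a b l hab _ ih =>
      obtain ⟨hp, hs, h⟩ := ih
      simp only [pword, sword]
      refine ⟨mul_nonneg hab.1 hp, mul_pos hab.2 hs, ?_⟩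
      rw [← h, Real.mul_rpow hab.2.le hs.le, ← Real.mul_rpow
        (mul_nonneg hab.1 (Real.rpow_nonneg hab.2.le r)) (mul_nonneg hp (Real.rpow_nonneg hs.le r))]
      ring_nf
  exact this.2.2

theorem mul_rpow_mem_Icc {x y r : ℝ} (hr : 0 ≤ r) (hx : 0 ≤ x ∧ x ≤ 1)
    (hy : 0 < x → 0 < y ∧ y ≤ 1) : 0 ≤ x * y ^ r ∧ x * y ^ r ≤ 1 := by
  rcases hx.1.lt_or_eq with hx0 | rfl
  · obtain ⟨hy0, hy1⟩ := hy hx0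
    have := Real.rpow_pos_of_pos hy0 r
    exact ⟨by positivity, mul_le_one₀ hx.2 this.le (Real.rpow_le_one hy0.le hy1 hr)⟩
  · simp

theorem mul_rpow_rpow_pos_iff {x y r t : ℝ} (hx : 0 ≤ x) (ht : 0 < t) (hy : 0 < x → 0 < y) :
    0 < (x * y ^ r) ^ t ↔ 0 < x := by
  rcases hx.lt_or_eq with hx0 | rfl
  · exact iff_of_true (Real.rpow_pos_of_pos (mul_pos hx0 (Real.rpow_pos_of_pos (hy hx0) r)) t) hx0
  · simp [Real.zero_rpow ht.ne']

theorem div_add_le_div_add_of_le {r s s' : ℝ} (hr : 0 ≤ r) (hs : 0 < s) (h : s ≤ s') :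
    s / (s + r) ≤ s' / (s' + r) := by
  rw [div_le_div_iff₀ (by linarith) (by linarith)]
  nlinarith

/-- The diagonal block of `p` on the states `S = {k + 1, …, k + N}`: `k = 0` for `P₁` and
`k = N` for `P₂`. -/
structure IsBlock (N k : ℕ) (S : Finset ℕ) (p sr : ℕ → ℕ → ℝ) : Prop where
  pos : 0 < N
  mem_iff : ∀ a, a ∈ S ↔ k + 1 ≤ a ∧ a ≤ k + N
  prob : ∀ a ∈ S, ∀ b ∈ S, 0 ≤ p a b ∧ p a b ≤ 1
  ratio : ∀ a ∈ S, ∀ b ∈ S, 0 < p a b → 0 < sr a b ∧ sr a b ≤ 1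
  irreducible : irreducibleOn (fun a b => p (a + k) (b + k)) (Icc 1 N)

namespace IsBlock

variable {N k : ℕ} {S : Finset ℕ} {p sr : ℕ → ℕ → ℝ} {r : ℝ}
  {A : ℝ → Matrix (Fin N) (Fin N) ℝ}

theorem index_mem (hB : IsBlock N k S p sr) (i : Fin N) : i.1 + 1 + k ∈ S :=
  (hB.mem_iff _).2 ⟨by omega, by omega⟩

theorem image_index (hB : IsBlock N k S p sr) :
    univ.image (fun i : Fin N => i.1 + 1 + k) = S := by
  ext a
  simp only [mem_image, mem_univ, true_and, hB.mem_iff]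
  exact ⟨by rintro ⟨i, rfl⟩; omega, fun h => ⟨⟨a - k - 1, by omega⟩, by simp; omega⟩⟩

theorem isIrreducible (hB : IsBlock N k S p sr) (hr : 0 ≤ r)
    (hA : ∀ t i j, A t i j =
      (p (i.1 + 1 + k) (j.1 + 1 + k) * sr (i.1 + 1 + k) (j.1 + 1 + k) ^ r) ^ t)
    {t : ℝ} (ht : 0 < t) : (A t).IsIrreducible := by
  have hmem := hB.index_mem
  refine isIrreducible_of_irreducibleOn hB.irreducible (fun i j => hA t i j ▸ Real.rpow_nonneg
    (mul_rpow_mem_Icc hr (hB.prob _ (hmem i) _ (hmem j)) (hB.ratio _ (hmem i) _ (hmem j))).1 t)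
    fun i j h => ?_
  rw [hA, mul_rpow_rpow_pos_iff (hB.prob _ (hmem i) _ (hmem j)).1 ht
    fun h => (hB.ratio _ (hmem i) _ (hmem j) h).1]
  exact h

theorem specRad_antitoneOn (hB : IsBlock N k S p sr) (hr : 0 ≤ r)
    (hA : ∀ t i j, A t i j =
      (p (i.1 + 1 + k) (j.1 + 1 + k) * sr (i.1 + 1 + k) (j.1 + 1 + k) ^ r) ^ t) :
    AntitoneOn (fun t => specRad (A t)) (Set.Ioi 0) := fun t ht t' ht' htt' => by
  have : NeZero N := ⟨hB.pos.ne'⟩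
  have hmem := hB.index_mem
  refine specRad_le_specRad (hB.isIrreducible hr hA (ht.out.trans_le htt'))
    (hB.isIrreducible hr hA ht.out) fun i j => ?_
  have hbase := mul_rpow_mem_Icc hr (hB.prob _ (hmem i) _ (hmem j)) (hB.ratio _ (hmem i) _ (hmem j))
  rw [hA, hA]
  exact Real.rpow_le_rpow_of_exponent_ge' hbase.1 hbase.2 (le_of_lt ht) htt'

theorem exists_bounds (hB : IsBlock N k S p sr) (hr : 0 < r)
    (hA : ∀ t i j, A t i j =
      (p (i.1 + 1 + k) (j.1 + 1 + k) * sr (i.1 + 1 + k) (j.1 + 1 + k) ^ r) ^ t)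
    {s₀ : ℝ} (hs₀ : 0 < s₀) (hρ₀ : specRad (A (s₀ / (s₀ + r))) = 1) {s : ℝ} (hs : 0 < s) :
    ∃ c5 c6 : ℝ, 0 < c5 ∧ 0 < c6 ∧ ∀ (roots : Finset ℕ) (Γ : Finset (List ℕ)), roots ⊆ S →
      roots.Nonempty → IsRootedMaxAntichain (edge p) S roots Γ →
      (s ≤ s₀ →
        c5 * specRad (A (s / (s + r))) ^ minLen Γ ≤
            ∑ σ ∈ Γ, (pword p σ * sword sr σ ^ r) ^ (s / (s + r)) ∧
          ∑ σ ∈ Γ, (pword p σ * sword sr σ ^ r) ^ (s / (s + r)) ≤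
            c6 * specRad (A (s / (s + r))) ^ maxLen Γ) ∧
      (s₀ < s →
        c5 * specRad (A (s / (s + r))) ^ maxLen Γ ≤
            ∑ σ ∈ Γ, (pword p σ * sword sr σ ^ r) ^ (s / (s + r)) ∧
          ∑ σ ∈ Γ, (pword p σ * sword sr σ ^ r) ^ (s / (s + r)) ≤
            c6 * specRad (A (s / (s + r))) ^ minLen Γ) := by
  have : NeZero N := ⟨hB.pos.ne'⟩
  set t := s / (s + r)
  have ht : 0 < t := by positivity
  have ht₀ : s₀ / (s₀ + r) ∈ Set.Ioi 0 := Set.mem_Ioi.2 (by positivity)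
  obtain ⟨c, C, hc, hC, hbd⟩ := exists_bounds_sum_pword_of_isIrreducible
    (W := fun a b => (p a b * sr a b ^ r) ^ t) (fun i j h => Fin.ext (by simpa using h))
    hB.image_index (hA t) (hB.isIrreducible hr.le hA ht)
  refine ⟨c, C, hc, hC, fun roots Γ hroots hne hΓ => ?_⟩
  have hsum : ∑ σ ∈ Γ, (pword p σ * sword sr σ ^ r) ^ t =
      ∑ σ ∈ Γ, pword (fun a b => (p a b * sr a b ^ r) ^ t) σ :=
    sum_congr rfl fun σ hσ => rpow_pword_mul_sword r t <|
      (List.IsChain.iff_mem.1 (hΓ.isChain σ hσ)).imp fun a b ⟨ha, hb, hab⟩ =>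
        ⟨(hB.prob a (hΓ.subset σ hσ a ha) b (hΓ.subset σ hσ b hb)).1,
          (hB.ratio a (hΓ.subset σ hσ a ha) b (hΓ.subset σ hσ b hb) hab).1⟩
  rw [hsum]
  have hbd' := hbd roots Γ hroots hne <| hΓ.congr_rel fun a ha b hb =>
    (mul_rpow_rpow_pos_iff (hB.prob a ha b hb).1 ht fun h => (hB.ratio a ha b hb h).1).symm
  refine ⟨fun h => ?_, fun h => ?_⟩
  · have h1 : 1 ≤ specRad (A t) :=
      hρ₀ ▸ hB.specRad_antitoneOn hr.le hA ht ht₀ (div_add_le_div_add_of_le hr.le hs h)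
    exact hbd' _ _ fun σ hσ =>
      ⟨pow_le_pow_right₀ h1 (minLen_le hσ), pow_le_pow_right₀ h1 (le_maxLen hσ)⟩
  · have h1 : specRad (A t) ≤ 1 :=
      hρ₀ ▸ hB.specRad_antitoneOn hr.le hA ht₀ ht (div_add_le_div_add_of_le hr.le hs₀ h.le)
    have h0 := (specRad_pos (hB.isIrreducible hr.le hA ht)).le
    exact hbd' _ _ fun σ hσ =>
      ⟨pow_le_pow_of_le_one h0 h1 (le_maxLen hσ), pow_le_pow_of_le_one h0 h1 (minLen_le hσ)⟩

end IsBlock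

end Blocks

theorem exists_isRootedMaxAntichain {p : ℕ → ℕ → ℝ} {S J : Finset ℕ} (hS : S.Nonempty)
    {f : ℕ → ℕ} (hf : ∀ j ∈ J, f j ∈ S) {Γ : Finset (List ℕ)}
    (h : isMaxAntichain (fun σ => σ ≠ [] ∧ (∀ x ∈ σ, x ∈ S) ∧ σ.IsChain (edge p))
        (fun x => (∀ n, x n ∈ S) ∧ ∀ n, 0 < p (x n) (x (n + 1))) Γ ∨
      ∃ j ∈ J, isMaxAntichain
        (fun σ => (σ ≠ [] ∧ (∀ x ∈ σ, x ∈ S) ∧ σ.IsChain (edge p)) ∧ σ.headD 0 = f j)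
        (fun x => ((∀ n, x n ∈ S) ∧ ∀ n, 0 < p (x n) (x (n + 1))) ∧ x 0 = f j) Γ) :
    ∃ roots ⊆ S, roots.Nonempty ∧ IsRootedMaxAntichain (edge p) S roots Γ := by
  rcases h with ⟨hw, hanti, hmax⟩ | ⟨j, hj, hw, hanti, hmax⟩
  · refine ⟨S, subset_rfl, hS, fun σ hσ => (hw σ hσ).1, fun σ hσ => (hw σ hσ).2.1,
      fun σ hσ => (hw σ hσ).2.2, fun σ hσ => ?_, hanti, fun x _ hxS hxR => hmax x ⟨hxS, hxR⟩⟩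
    obtain ⟨hne, hσS, -⟩ := hw σ hσ
    cases σ with
    | nil => exact absurd rfl hne
    | cons a t => exact hσS a List.mem_cons_self
  · exact ⟨{f j}, singleton_subset_iff.2 (hf j hj), singleton_nonempty _,
      fun σ hσ => (hw σ hσ).1.1, fun σ hσ => (hw σ hσ).1.2.1, fun σ hσ => (hw σ hσ).1.2.2,
      fun σ hσ => mem_singleton.2 (hw σ hσ).2, hanti,
      fun x hx0 hxS hxR => hmax x ⟨⟨hxS, hxR⟩, mem_singleton.1 hx0⟩⟩

theorem sr_pos_le_one {N : ℕ} {p sr : ℕ → ℕ → ℝ}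
    (hsrInv : ∀ i ∈ Finset.Icc 1 N, ∀ j ∈ Finset.Icc 1 N, ∀ a b : ℕ,
      (a = i ∨ a = i + N) → (b = j ∨ b = j + N) → 0 < p a b → sr a b = sr i j)
    (hsr : ∀ i ∈ Finset.Icc 1 N, ∀ j ∈ Finset.Icc 1 N, isSword p N [i, j] →
      0 < sr i j ∧ sr i j < 1)
    {i j a b : ℕ} (hi : i ∈ Icc 1 N) (hj : j ∈ Icc 1 N) (ha : a = i ∨ a = i + N)
    (hb : b = j ∨ b = j + N) (hab : 0 < p a b) : 0 < sr a b ∧ sr a b ≤ 1 := by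
  have hlift : (Gam p N [i, j]).Nonempty := by
    refine ⟨[a, b], mem_filter.2 ⟨?_, List.isChain_pair.2 hab⟩⟩
    rcases ha with rfl | rfl <;> rcases hb with rfl | rfl <;> simp [lifts]
  have hword : isPsiWord N [i, j] := ⟨List.cons_ne_nil _ _, fun x hx => by
    rcases List.mem_pair.1 hx with rfl | rfl
    exacts [hi, hj]⟩
  rw [hsrInv i hi j hj a b ha hb hab]
  exact (hsr i hi j hj ⟨hword, hlift⟩).imp_right le_of_lt

theorem stmt15_general
    (N : ℕ) (hN : 2 ≤ N) (r : ℝ) (hr : 0 < r)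
    (p : ℕ → ℕ → ℝ)
    (hp0 : ∀ i j, 0 ≤ p i j)
    (hpsum : ∀ i ∈ Finset.Icc 1 (2 * N), ∑ j ∈ Finset.Icc 1 (2 * N), p i j = 1)
    (sr : ℕ → ℕ → ℝ)
    (hsrInv : ∀ i ∈ Finset.Icc 1 N, ∀ j ∈ Finset.Icc 1 N, ∀ a b : ℕ,
      (a = i ∨ a = i + N) → (b = j ∨ b = j + N) → 0 < p a b → sr a b = sr i j)
    (hsr : ∀ i ∈ Finset.Icc 1 N, ∀ j ∈ Finset.Icc 1 N, isSword p N [i, j] →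
      0 < sr i j ∧ sr i j < 1)
    (hA1 : A1 p N)
    (s1 : ℝ) (hs1 : 0 < s1) (hρ1 : specRad (matA1 p sr N r (s1 / (s1 + r))) = 1)
    (s2 : ℝ) (hs2 : 0 < s2) (hρ2 : specRad (matA2 p sr N r (s2 / (s2 + r))) = 1)
    (s : ℝ) (hs : 0 < s) :
    (∃ c5 c6 : ℝ, 0 < c5 ∧ 0 < c6 ∧
      ∀ Γ : Finset (List ℕ),
        (isMaxAntichain (isH1word p N) (isH1seq p N) Γ ∨
          ∃ j ∈ Finset.Icc 1 N, isMaxAntichain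
            (fun σ => isH1word p N σ ∧ σ.headD 0 = j)
            (fun x => isH1seq p N x ∧ x 0 = j) Γ) →
        (s ≤ s1 →
          c5 * specRad (matA1 p sr N r (s / (s + r))) ^ minLen Γ ≤
              (∑ σ ∈ Γ, (pword p σ * sword sr σ ^ r) ^ (s / (s + r))) ∧
            (∑ σ ∈ Γ, (pword p σ * sword sr σ ^ r) ^ (s / (s + r))) ≤
              c6 * specRad (matA1 p sr N r (s / (s + r))) ^ maxLen Γ) ∧
        (s1 < s →
          c5 * specRad (matA1 p sr N r (s / (s + r))) ^ maxLen Γ ≤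
              (∑ σ ∈ Γ, (pword p σ * sword sr σ ^ r) ^ (s / (s + r))) ∧
            (∑ σ ∈ Γ, (pword p σ * sword sr σ ^ r) ^ (s / (s + r))) ≤
              c6 * specRad (matA1 p sr N r (s / (s + r))) ^ minLen Γ)) ∧
    (∃ c5 c6 : ℝ, 0 < c5 ∧ 0 < c6 ∧
      ∀ Γ : Finset (List ℕ),
        (isMaxAntichain (isH2word p N) (isH2seq p N) Γ ∨
          ∃ j ∈ Finset.Icc 1 N, isMaxAntichain
            (fun σ => isH2word p N σ ∧ σ.headD 0 = j + N)
            (fun x => isH2seq p N x ∧ x 0 = j + N) Γ) →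
        (s ≤ s2 →
          c5 * specRad (matA2 p sr N r (s / (s + r))) ^ minLen Γ ≤
              (∑ σ ∈ Γ, (pword p σ * sword sr σ ^ r) ^ (s / (s + r))) ∧
            (∑ σ ∈ Γ, (pword p σ * sword sr σ ^ r) ^ (s / (s + r))) ≤
              c6 * specRad (matA2 p sr N r (s / (s + r))) ^ maxLen Γ) ∧
        (s2 < s →
          c5 * specRad (matA2 p sr N r (s / (s + r))) ^ maxLen Γ ≤
              (∑ σ ∈ Γ, (pword p σ * sword sr σ ^ r) ^ (s / (s + r))) ∧
            (∑ σ ∈ Γ, (pword p σ * sword sr σ ^ r) ^ (s / (s + r))) ≤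
              c6 * specRad (matA2 p sr N r (s / (s + r))) ^ minLen Γ)) := by
  have hprob : ∀ a ∈ Icc 1 (2 * N), ∀ b ∈ Icc 1 (2 * N), 0 ≤ p a b ∧ p a b ≤ 1 :=
    fun a ha b hb => ⟨hp0 a b, hpsum a ha ▸ single_le_sum (fun c _ => hp0 a c) hb⟩
  have hS1 : Icc 1 N ⊆ Icc 1 (2 * N) := Icc_subset_Icc le_rfl (by omega)
  have hS2 : Icc (N + 1) (2 * N) ⊆ Icc 1 (2 * N) := Icc_subset_Icc (by omega) le_rfl
  have hB1 : IsBlock N 0 (Icc 1 N) p sr :=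
    ⟨by omega, by simp, fun a ha b hb => hprob a (hS1 ha) b (hS1 hb),
      fun a ha b hb => sr_pos_le_one hsrInv hsr ha hb (.inl rfl) (.inl rfl), hA1.1⟩
  have hB2 : IsBlock N N (Icc (N + 1) (2 * N)) p sr :=
    ⟨by omega, by simp; omega, fun a ha b hb => hprob a (hS2 ha) b (hS2 hb), fun a ha b hb => by
      simp only [mem_Icc] at ha hb
      exact sr_pos_le_one hsrInv hsr (i := a - N) (j := b - N) (mem_Icc.2 ⟨by omega, by omega⟩)
        (mem_Icc.2 ⟨by omega, by omega⟩) (.inr (by omega)) (.inr (by omega)), hA1.2.1⟩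
  obtain ⟨c5, c6, hc5, hc6, h1⟩ := hB1.exists_bounds hr (A := matA1 p sr N r)
    (fun _ _ _ => rfl) hs1 hρ1 hs
  obtain ⟨c5', c6', hc5', hc6', h2⟩ := hB2.exists_bounds hr (A := matA2 p sr N r)
    (fun _ _ _ => rfl) hs2 hρ2 hs
  refine ⟨⟨c5, c6, hc5, hc6, fun Γ hΓ => ?_⟩, ⟨c5', c6', hc5', hc6', fun Γ hΓ => ?_⟩⟩
  · obtain ⟨roots, hroots, hne, hΓ'⟩ := exists_isRootedMaxAntichain (f := id)
      ⟨1, by simp; omega⟩ (fun j hj => hj) hΓ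
    exact h1 roots Γ hroots hne hΓ'
  · obtain ⟨roots, hroots, hne, hΓ'⟩ := exists_isRootedMaxAntichain (f := (· + N))
      ⟨N + 1, by simp; omega⟩ (fun j hj => by simp at hj ⊢; omega) hΓ
    exact h2 roots Γ hroots hne hΓ'

/-- **Lemma 4.1.** Assume (A1)–(A3) and fix `s > 0`. For each `i ∈ {1,2}` there are
constants `c₅(s), c₆(s) > 0`, independent of the antichain, such that for every finite
maximal antichain `Γ` in `H_i^*` or in `H_i^*(j)`:
if `s ≤ s_{i,r}` then `c₅ ρ_i(s)^{l(Γ)} ≤ Σ_{σ∈Γ} (p_σ s_σ^r)^{s/(s+r)} ≤ c₆ ρ_i(s)^{L(Γ)}`,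
and if `s > s_{i,r}` then `c₅ ρ_i(s)^{L(Γ)} ≤ Σ_{σ∈Γ} (p_σ s_σ^r)^{s/(s+r)} ≤ c₆ ρ_i(s)^{l(Γ)}`. -/
theorem stmt15
    (N q : ℕ) (hN : 2 ≤ N) (hq : 1 ≤ q) (r : ℝ) (hr : 0 < r)
    (p : ℕ → ℕ → ℝ)
    (hp0 : ∀ i j, 0 ≤ p i j)
    (hpsupp : ∀ i j, 0 < p i j → i ∈ Finset.Icc 1 (2 * N) ∧ j ∈ Finset.Icc 1 (2 * N))
    (hpsum : ∀ i ∈ Finset.Icc 1 (2 * N), ∑ j ∈ Finset.Icc 1 (2 * N), p i j = 1)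
    (sr : ℕ → ℕ → ℝ)
    (hsrInv : ∀ i ∈ Finset.Icc 1 N, ∀ j ∈ Finset.Icc 1 N, ∀ a b : ℕ,
      (a = i ∨ a = i + N) → (b = j ∨ b = j + N) → 0 < p a b → sr a b = sr i j)
    (hsr : ∀ i ∈ Finset.Icc 1 N, ∀ j ∈ Finset.Icc 1 N, isSword p N [i, j] →
      0 < sr i j ∧ sr i j < 1)
    (hA1 : A1 p N) (hA2 : A2 p N) (hA3 : A3 p N)
    (s1 : ℝ) (hs1 : 0 < s1) (hρ1 : specRad (matA1 p sr N r (s1 / (s1 + r))) = 1)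
    (s2 : ℝ) (hs2 : 0 < s2) (hρ2 : specRad (matA2 p sr N r (s2 / (s2 + r))) = 1)
    (s : ℝ) (hs : 0 < s) :
    (∃ c5 c6 : ℝ, 0 < c5 ∧ 0 < c6 ∧
      ∀ Γ : Finset (List ℕ),
        (isMaxAntichain (isH1word p N) (isH1seq p N) Γ ∨
          ∃ j ∈ Finset.Icc 1 N, isMaxAntichain
            (fun σ => isH1word p N σ ∧ σ.headD 0 = j)
            (fun x => isH1seq p N x ∧ x 0 = j) Γ) →
        (s ≤ s1 →
          c5 * specRad (matA1 p sr N r (s / (s + r))) ^ minLen Γ ≤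
              (∑ σ ∈ Γ, (pword p σ * sword sr σ ^ r) ^ (s / (s + r))) ∧
            (∑ σ ∈ Γ, (pword p σ * sword sr σ ^ r) ^ (s / (s + r))) ≤
              c6 * specRad (matA1 p sr N r (s / (s + r))) ^ maxLen Γ) ∧
        (s1 < s →
          c5 * specRad (matA1 p sr N r (s / (s + r))) ^ maxLen Γ ≤
              (∑ σ ∈ Γ, (pword p σ * sword sr σ ^ r) ^ (s / (s + r))) ∧
            (∑ σ ∈ Γ, (pword p σ * sword sr σ ^ r) ^ (s / (s + r))) ≤
              c6 * specRad (matA1 p sr N r (s / (s + r))) ^ minLen Γ)) ∧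
    (∃ c5 c6 : ℝ, 0 < c5 ∧ 0 < c6 ∧
      ∀ Γ : Finset (List ℕ),
        (isMaxAntichain (isH2word p N) (isH2seq p N) Γ ∨
          ∃ j ∈ Finset.Icc 1 N, isMaxAntichain
            (fun σ => isH2word p N σ ∧ σ.headD 0 = j + N)
            (fun x => isH2seq p N x ∧ x 0 = j + N) Γ) →
        (s ≤ s2 →
          c5 * specRad (matA2 p sr N r (s / (s + r))) ^ minLen Γ ≤
              (∑ σ ∈ Γ, (pword p σ * sword sr σ ^ r) ^ (s / (s + r))) ∧
            (∑ σ ∈ Γ, (pword p σ * sword sr σ ^ r) ^ (s / (s + r))) ≤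
              c6 * specRad (matA2 p sr N r (s / (s + r))) ^ maxLen Γ) ∧
        (s2 < s →
          c5 * specRad (matA2 p sr N r (s / (s + r))) ^ maxLen Γ ≤
              (∑ σ ∈ Γ, (pword p σ * sword sr σ ^ r) ^ (s / (s + r))) ∧
            (∑ σ ∈ Γ, (pword p σ * sword sr σ ^ r) ^ (s / (s + r))) ≤
              c6 * specRad (matA2 p sr N r (s / (s + r))) ^ minLen Γ)) :=
  stmt15_general N hN r hr p hp0 hpsum sr hsrInv hsr hA1 s1 hs1 hρ1 s2 hs2 hρ2 s hs

end MTM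

end
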